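/- arXiv:1812.03585 — 3 statements merged into one kernel-verified Lean document; each statement's English description precedes it below -/
import Mathlib

section
/- Let $A$ be a unital associative ring and let $k > 1$ be an integer. Then for all $g_1, \dots, g_{k-1}, f_1, f_2, f_3, f_4 \in A$, the element $[g_1, \dots, g_{k-1}, f_1][f_2, f_3, f_4] + [g_1, \dots, g_{k-1}, f_2][f_1, f_3, f_4]$ belongs to $T^{(k+2)}(A)$. -/
/-- The ring commutator `[a, b] = a * b - b * a`. -/
def brk {A : Type*} [NonUnitalNonAssocRing A] (a b : A) : A := a * b - b * a

/-- The left-normed commutator `[a 0, a 1, ..., a (k-1)]`. -/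
def lnc {A : Type*} [NonUnitalNonAssocRing A] : ∀ {k : ℕ}, (Fin k → A) → A
  | 0, _ => 0
  | 1, a => a 0
  | k + 2, a => brk (lnc (Fin.init a)) (a (Fin.last (k + 1)))

/-- `T A m` is the two-sided ideal of `A` generated by all left-normed commutators
of length `m` (for `m = 1` this is all of `A`). -/
def T (A : Type*) [NonUnitalNonAssocRing A] (m : ℕ) : TwoSidedIdeal A :=
  TwoSidedIdeal.span {x | ∃ a : Fin m → A, x = lnc a}

lemma lnc_snoc {A : Type*} [NonUnitalNonAssocRing A] {n : ℕ} (h : Fin (n + 1) → A) (x : A) :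
    lnc (Fin.snoc h x) = brk (lnc h) x := by
  have h0 : lnc (Fin.snoc h x) =
      brk (lnc (Fin.init (Fin.snoc h x : Fin (n + 2) → A)))
        ((Fin.snoc h x : Fin (n + 2) → A) (Fin.last (n + 1))) := rfl
  rw [h0, Fin.init_snoc, Fin.snoc_last]

lemma lnc_three {A : Type*} [NonUnitalNonAssocRing A] (a b c : A) :
    lnc ![a, b, c] = brk (brk a b) c := by
  have h1 : Fin.init ![a, b, c] = ![a, b] := by
    funext i; fin_cases i <;> simp [Fin.init]
  have h2 : Fin.init ![a, b] = ![a] := by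
    funext i; fin_cases i <;> simp [Fin.init]
  show brk (lnc (Fin.init ![a, b, c])) (![a, b, c] (Fin.last 2)) = _
  rw [h1]
  show brk (brk (lnc (Fin.init ![a, b])) (![a, b] (Fin.last 1))) _ = _
  rw [h2]
  rfl

lemma key_identity {A : Type*} [Ring A] (u a b c d : A) :
    brk u a * brk (brk b c) d + brk u b * brk (brk a c) d =
      -a * (brk (brk (brk u b) c) d)
      - b * (brk (brk (brk u a) c) d)
      + (brk (brk (brk u (a * b)) c) d)
      + (brk (brk (brk u (a * b)) d) c)
      - (brk (brk (brk u (b * a)) d) c)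
      + c * (brk (brk (brk u a) b) d)
      + c * (brk (brk (brk u a) b) d)
      + c * (brk (brk (brk u a) b) d)
      + (brk (brk (brk u a) (b * c)) d)
      - (brk (brk (brk u a) (c * b)) d)
      + d * (brk (brk (brk u a) b) c)
      + d * (brk (brk (brk u a) b) c)
      + d * (brk (brk (brk u a) b) c)
      + (brk (brk (brk u a) (b * d)) c)
      - (brk (brk (brk u a) (d * b)) c)
      - (brk (brk (brk u a) b) (c * d))
      - (brk (brk (brk u a) b) (d * c))
      - (brk (brk (brk u a) b) (d * c))
      - c * (brk (brk (brk u a) d) b)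
      - d * (brk (brk (brk u a) c) b)
      + (brk (brk (brk u a) (d * c)) b)
      + (brk (brk (brk u b) (a * c)) d)
      - (brk (brk (brk u b) (c * a)) d)
      + (brk (brk (brk u b) (a * d)) c)
      - (brk (brk (brk u b) (d * a)) c)
      - c * (brk (brk (brk u b) d) a)
      - d * (brk (brk (brk u b) c) a)
      + (brk (brk (brk u b) (d * c)) a) := by
  simp only [brk]
  noncomm_ring

theorem comm_mul_comm3_add_swap12_mem {A : Type*} [Ring A] (k : ℕ) (hk : 1 < k)
    (g : Fin (k - 1) → A) (f₁ f₂ f₃ f₄ : A) :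
    lnc (Fin.snoc g f₁) * lnc ![f₂, f₃, f₄] + lnc (Fin.snoc g f₂) * lnc ![f₁, f₃, f₄]
      ∈ T A (k + 2) := by
  obtain ⟨m, rfl⟩ : ∃ m, k = m + 2 := ⟨k - 2, by omega⟩
  show lnc (Fin.snoc (g : Fin (m + 1) → A) f₁) * lnc ![f₂, f₃, f₄]
      + lnc (Fin.snoc (g : Fin (m + 1) → A) f₂) * lnc ![f₁, f₃, f₄] ∈ T A (m + 4)
  set g' : Fin (m + 1) → A := g with hg'
  have hB : ∀ x y z : A, brk (brk (brk (lnc g') x) y) z ∈ T A (m + 4) := by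
    intro x y z
    apply TwoSidedIdeal.subset_span
    exact ⟨Fin.snoc (Fin.snoc (Fin.snoc g' x) y) z, by rw [lnc_snoc, lnc_snoc, lnc_snoc]⟩
  rw [lnc_snoc, lnc_snoc, lnc_three, lnc_three, key_identity]
  repeat
    first
    | exact hB _ _ _
    | apply TwoSidedIdeal.add_mem
    | apply TwoSidedIdeal.sub_mem
    | apply TwoSidedIdeal.neg_mem
    | apply TwoSidedIdeal.mul_mem_left
end

section
/- Let $A$ be a unital associative ring and let $k \ge 1$ be an integer. Then for every $t \in T^{(k)}(A)$ and all $u, v \in A$, the element $3\,[t, u, v] = 3\,[[t,u],v]$ belongs to $T^{(k+2)}(A)$; in other words, $3\,[T^{(k)}, A, A] \subseteq T^{(k+2)}$. -/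
section NonUnitalNonAssocRing

variable {R : Type*} [NonUnitalNonAssocRing R]

@[simp] theorem zero_brk (b : R) : brk 0 b = 0 := by
  simp [brk]

@[simp] theorem add_brk (a b c : R) : brk (a + b) c = brk a c + brk b c := by
  simp only [brk, add_mul, mul_add]; abel

@[simp] theorem neg_brk (a b : R) : brk (-a) b = -brk a b := by
  simp only [brk, neg_mul, mul_neg]; abel

theorem lnc_snoc_s7 {k : ℕ} (a : Fin (k + 1) → R) (b : R) : lnc (Fin.snoc a b) = brk (lnc a) b := by
  simp [lnc, Fin.init_snoc]

theorem lnc_mem_T {k : ℕ} (a : Fin k → R) : lnc a ∈ T R k :=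
  TwoSidedIdeal.subset_span ⟨a, rfl⟩

theorem brk_lnc_mem_T {k : ℕ} (a : Fin (k + 1) → R) (b : R) : brk (lnc a) b ∈ T R (k + 2) :=
  lnc_snoc_s7 a b ▸ lnc_mem_T _

theorem brk_brk_mem_T_three (t u v : R) : brk (brk t u) v ∈ T R 3 :=
  brk_lnc_mem_T (Fin.snoc (fun _ : Fin 1 => t) u) v

theorem brk_brk_brk_lnc_mem_T {k : ℕ} (a : Fin (k + 1) → R) (q r s : R) :
    brk (brk (brk (lnc a) q) r) s ∈ T R (k + 4) := by
  rw [← lnc_snoc_s7, ← lnc_snoc_s7]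
  exact brk_lnc_mem_T _ s

end NonUnitalNonAssocRing

section CentralCommutators

variable {R : Type*} [NonUnitalRing R] {z : R}

theorem brk_brk_eq_zero (hz : ∀ r s, brk (brk z r) s = 0) (a b : R) :
    brk z (brk a b) = 0 := by
  have jacobi : brk z (brk a b) = brk (brk z a) b - brk (brk z b) a := by
    simp only [brk]; noncomm_ring
  rw [jacobi, hz, hz, sub_zero]

theorem brk_mul_brk_eq_brk_mul_brk (hz : ∀ r s, brk (brk z r) s = 0) (a b c : R) :
    brk a b * brk z c = brk z a * brk b c := by
  have h : brk a b * brk z c - brk z a * brk b c =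
      brk (brk z (a * c)) b - brk (brk z a) b * c - a * brk (brk z c) b := by
    simp only [brk]; noncomm_ring
  rw [← sub_eq_zero, h, hz, hz, hz, zero_mul, mul_zero, sub_zero, sub_zero]

/- Expand `x z y = x y z + x [z, y]` by the Leibniz rule: besides `[[x y, u], v] z` and terms
killed by `hz`, what remains is `[x y, u] [z, v] + [x y, v] [z, u]` and `[[x, u], v] [z, y]`,
which vanish by the two previous lemmas. -/
theorem brk_brk_mul_mul (hz : ∀ r s, brk (brk z r) s = 0) (x y u v : R) :
    brk (brk (x * z * y) u) v = brk (brk (x * y) u) v * z := by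
  have h : brk (brk (x * z * y) u) v - brk (brk (x * y) u) v * z =
      (brk (x * y) u * brk z v - brk z (x * y) * brk u v) +
      (brk (x * y) v * brk z u - brk z (x * y) * brk v u) +
      (brk (brk x u) v * brk z y - brk z (brk x u) * brk v y) +
      brk z (brk x u) * brk v y + x * y * brk (brk z u) v +
      brk x u * brk (brk z y) v + brk x v * brk (brk z y) u + x * brk (brk (brk z y) u) v := by
    simp only [brk]; noncomm_ring
  rw [← sub_eq_zero, h, brk_mul_brk_eq_brk_mul_brk hz, brk_mul_brk_eq_brk_mul_brk hz,
    brk_mul_brk_eq_brk_mul_brk hz, brk_brk_eq_zero hz]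
  simp [hz]

end CentralCommutators

section ThirdCommutatorsVanish

variable {R : Type*} [Ring R] {e : R}

theorem brk_brk_brk_eq_zero (he : ∀ q r s, brk (brk (brk e q) r) s = 0) (a b c : R) :
    brk e (brk (brk a b) c) = 0 := by
  have h : brk e (brk (brk a b) c) =
      brk (brk (brk e a) b) c - brk (brk (brk e b) a) c - brk (brk e c) (brk a b) := by
    simp only [brk]; noncomm_ring
  rw [h, he, he, brk_brk_eq_zero (he c), sub_zero, sub_zero]

theorem brk_brk_mul_brk_eq_neg_swap_right (he : ∀ q r s, brk (brk (brk e q) r) s = 0)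
    (w u v m : R) : brk (brk w u) v * brk e m = -(brk (brk w u) m * brk e v) := by
  have h : brk (brk w u) v * brk e m + brk (brk w u) m * brk e v =
      brk e (brk (brk w u) (v * m)) - brk e (brk (brk w u) v) * m -
        v * brk e (brk (brk w u) m) - brk (brk e v) (brk (brk w u) m) := by
    simp only [brk]; noncomm_ring
  rw [eq_neg_iff_add_eq_zero, h, brk_brk_brk_eq_zero he, brk_brk_brk_eq_zero he,
    brk_brk_brk_eq_zero he, brk_brk_eq_zero (he v)]
  simp

theorem brk_brk_mul_brk_eq_neg_swap_left (he : ∀ q r s, brk (brk (brk e q) r) s = 0)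
    (w u v m : R) : brk (brk w u) v * brk e m = -(brk (brk w m) v * brk e u) := by
  rw [eq_neg_iff_add_eq_zero]
  calc brk (brk w u) v * brk e m + brk (brk w m) v * brk e u
      = -(brk (brk (1 * u) w) v * brk e m + brk (brk (m * 1) w) v * brk e u) := by
        simp only [brk]; noncomm_ring
    _ = -(brk (brk (1 * brk e m * u) w) v + brk (brk (m * brk e u * 1) w) v) := by
        rw [brk_brk_mul_mul (he m), brk_brk_mul_mul (he u)]
    _ = -brk (brk (brk e (m * u)) w) v := by
        simp only [brk]; noncomm_ring
    _ = 0 := by rw [he, neg_zero]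

theorem brk_brk_mul_brk_eq_neg_swap_mid (he : ∀ q r s, brk (brk (brk e q) r) s = 0)
    (w u v m : R) : brk (brk w u) v * brk e m = -(brk (brk w v) u * brk e m) := by
  rw [brk_brk_mul_brk_eq_neg_swap_right he w u v m, brk_brk_mul_brk_eq_neg_swap_left he w u m v,
    brk_brk_mul_brk_eq_neg_swap_right he w v m u, neg_neg]

theorem three_mul_brk_brk_mul_brk_eq_zero (he : ∀ q r s, brk (brk (brk e q) r) s = 0)
    (w u v m : R) : 3 * (brk (brk w u) v * brk e m) = 0 := by
  have jacobi : brk (brk w u) v + brk (brk u v) w + brk (brk v w) u = 0 := by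
    simp only [brk]; noncomm_ring
  have h₁ : brk (brk u v) w * brk e m = brk (brk w u) v * brk e m := by
    rw [brk_brk_mul_brk_eq_neg_swap_mid he u v w m]
    simp only [brk]; noncomm_ring
  have h₂ : brk (brk v w) u * brk e m = brk (brk w u) v * brk e m := by
    rw [brk_brk_mul_brk_eq_neg_swap_mid he v w u m, ← h₁]
    simp only [brk]; noncomm_ring
  calc 3 * (brk (brk w u) v * brk e m)
      = brk (brk w u) v * brk e m + brk (brk u v) w * brk e m + brk (brk v w) u * brk e m := by
        rw [h₁, h₂]; noncomm_ring
    _ = 0 := by rw [← add_mul, ← add_mul, jacobi, zero_mul]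

theorem three_mul_brk_brk_mul_brk_mul_eq_zero (he : ∀ q r s, brk (brk (brk e q) r) s = 0)
    (m x y u v : R) : 3 * brk (brk (x * brk e m * y) u) v = 0 := by
  rw [brk_brk_mul_mul (he m)]
  exact three_mul_brk_brk_mul_brk_eq_zero he (x * y) u v m

theorem three_mul_brk_brk_mul_brk_mul_mem {J : TwoSidedIdeal R}
    (he : ∀ q r s, brk (brk (brk e q) r) s ∈ J) (m x y u v : R) :
    3 * brk (brk (x * brk e m * y) u) v ∈ J := by
  let π := J.ringCon.mk'
  have mem_iff : ∀ a, a ∈ J ↔ π a = 0 := fun a => by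
    rw [← TwoSidedIdeal.mem_ker, TwoSidedIdeal.ker_ringCon_mk']
  have map_brk : ∀ a b, π (brk a b) = brk (π a) (π b) := fun a b => by
    simp only [brk, map_sub, map_mul]
  have he' : ∀ q r s, brk (brk (brk (π e) q) r) s = 0 := by
    intro q r s
    obtain ⟨q, rfl⟩ := J.ringCon.mk'_surjective q
    obtain ⟨r, rfl⟩ := J.ringCon.mk'_surjective r
    obtain ⟨s, rfl⟩ := J.ringCon.mk'_surjective s
    rw [← map_brk, ← map_brk, ← map_brk, ← mem_iff]
    exact he q r s
  rw [mem_iff, map_mul, map_ofNat, map_brk, map_brk, map_mul, map_mul]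
  exact three_mul_brk_brk_mul_brk_mul_eq_zero he' (π m) (π x) (π y) (π u) (π v)

end ThirdCommutatorsVanish

theorem three_mul_brk_brk_mul_lnc_mul_mem {A : Type*} [Ring A] :
    ∀ {k : ℕ} (a : Fin k → A) (x y u v : A), 3 * brk (brk (x * lnc a * y) u) v ∈ T A (k + 2)
  | 0, _, x, y, u, v => by simp [lnc]
  | 1, _, x, y, u, v => (T A 3).mul_mem_left 3 _ (brk_brk_mem_T_three _ u v)
  | _ + 2, a, x, y, u, v =>
    three_mul_brk_brk_mul_brk_mul_mem (brk_brk_brk_lnc_mem_T (Fin.init a)) _ x y u v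

theorem three_mul_comm_T_A_A_mem_general {A : Type*} [Ring A] (k : ℕ)
    (t : A) (ht : t ∈ T A k) (u v : A) :
    3 * brk (brk t u) v ∈ T A (k + 2) := by
  rw [T, TwoSidedIdeal.mem_span_iff_mem_addSubgroup_closure] at ht
  induction ht using AddSubgroup.closure_induction with
  | mem _ h =>
    obtain ⟨_, ⟨x, -, _, ⟨a, rfl⟩, rfl⟩, y, -, rfl⟩ := h
    exact three_mul_brk_brk_mul_lnc_mul_mem a x y u v
  | zero => simp
  | add _ _ _ _ h₁ h₂ =>
    rw [add_brk, add_brk, mul_add]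
    exact add_mem h₁ h₂
  | neg _ _ h =>
    rw [neg_brk, neg_brk, mul_neg]
    exact neg_mem h

theorem three_mul_comm_T_A_A_mem {A : Type*} [Ring A] (k : ℕ) (hk : 1 ≤ k)
    (t : A) (ht : t ∈ T A k) (u v : A) :
    3 * brk (brk t u) v ∈ T A (k + 2) :=
  three_mul_comm_T_A_A_mem_general k t ht u v
end

section
/- Let $A$ be a unital associative ring and let $m, n$ be integers with $m, n > 1$. Then for all $a_1, \dots, a_m, b_1, \dots, b_n \in A$, the product $[a_1, \dots, a_m][b_1, \dots, b_n]$ belongs to $T^{(m+n-2)}(A)$. -/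
section NonUnitalNonAssocRing

variable {A : Type*} [NonUnitalNonAssocRing A]

lemma add_brk_s14 (x y g : A) : brk (x + y) g = brk x g + brk y g := by
  simp only [brk, add_mul, mul_add]; abel

lemma neg_brk_s14 (x g : A) : brk (-x) g = -brk x g := by
  simp only [brk, neg_mul, mul_neg]; abel

lemma foldl_brk_add (x y : A) (gs : List A) :
    gs.foldl brk (x + y) = gs.foldl brk x + gs.foldl brk y := by
  induction gs generalizing x y with
  | nil => rfl
  | cons g gs ih => simp only [List.foldl_cons, add_brk_s14, ih]

lemma foldl_brk_neg (x : A) (gs : List A) : gs.foldl brk (-x) = -gs.foldl brk x := by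
  induction gs generalizing x with
  | nil => rfl
  | cons g gs ih => simp only [List.foldl_cons, neg_brk_s14, ih]

lemma foldl_brk_zero (gs : List A) : gs.foldl brk (0 : A) = 0 := by
  simpa using foldl_brk_add (0 : A) 0 gs

lemma brk_mem_T {j : ℕ} {x : A} (hx : x ∈ T A j) (g : A) : brk x g ∈ T A j :=
  sub_mem ((T A j).mul_mem_right _ _ hx) ((T A j).mul_mem_left _ _ hx)

lemma T_anti {j k : ℕ} (hj : 1 ≤ j) (hjk : j ≤ k) : T A k ≤ T A j := by
  induction k, hjk using Nat.le_induction with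
  | base => exact le_rfl
  | succ k hk ih =>
    obtain ⟨k, rfl⟩ : ∃ i, k = i + 1 := ⟨k - 1, by omega⟩
    refine le_trans (TwoSidedIdeal.span_le.2 ?_) ih
    rintro _ ⟨a, rfl⟩
    exact brk_mem_T (TwoSidedIdeal.subset_span ⟨Fin.init a, rfl⟩) _

variable (A) in
def commSpan (k : ℕ) : AddSubgroup A :=
  AddSubgroup.closure {x | ∃ a : Fin k → A, x = lnc a}

lemma lnc_mem_commSpan {k : ℕ} (a : Fin k → A) : lnc a ∈ commSpan A k :=
  AddSubgroup.subset_closure ⟨a, rfl⟩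

lemma mem_T_of_mem_commSpan {k : ℕ} {x : A} (hx : x ∈ commSpan A k) : x ∈ T A k := by
  induction hx using AddSubgroup.closure_induction with
  | mem x hx => exact TwoSidedIdeal.subset_span hx
  | zero => exact zero_mem _
  | add x y _ _ hx hy => exact add_mem hx hy
  | neg x _ hx => exact neg_mem hx

lemma brk_mem_commSpan {k : ℕ} {x : A} (hx : x ∈ commSpan A k) (g : A) :
    brk x g ∈ commSpan A (k + 1) := by
  induction hx using AddSubgroup.closure_induction with
  | mem x hx =>
    obtain ⟨a, rfl⟩ := hx
    cases k with
    | zero => simp [lnc, brk]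
    | succ k =>
      convert lnc_mem_commSpan (Fin.snoc a g) using 1
      simp [lnc, Fin.init_snoc]
  | zero => simp [brk]
  | add x y _ _ hx hy => rw [add_brk_s14]; exact add_mem hx hy
  | neg x _ hx => rw [neg_brk_s14]; exact neg_mem hx

@[elab_as_elim]
lemma commSpan_add_two_induction {k : ℕ} {p : A → Prop} (zero : p 0)
    (add : ∀ x y, p x → p y → p (x + y)) (neg : ∀ x, p x → p (-x))
    (bracket : ∀ x ∈ commSpan A (k + 1), ∀ d, p (brk x d)) {z : A}
    (hz : z ∈ commSpan A (k + 2)) : p z := by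
  induction hz using AddSubgroup.closure_induction with
  | mem x hx => obtain ⟨a, rfl⟩ := hx; exact bracket _ (lnc_mem_commSpan _) _
  | zero => exact zero
  | add x y _ _ hx hy => exact add x y hx hy
  | neg x _ hx => exact neg x hx

variable (A) in
def commStable (j : ℕ) : AddSubgroup A where
  carrier := {x | ∀ gs : List A, gs.foldl brk x ∈ T A (j + gs.length)}
  add_mem' hx hy gs := by rw [foldl_brk_add]; exact add_mem (hx gs) (hy gs)
  zero_mem' gs := by rw [foldl_brk_zero]; exact zero_mem _
  neg_mem' hx gs := by rw [foldl_brk_neg]; exact neg_mem (hx gs)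

lemma mem_T_of_mem_commStable {j : ℕ} {x : A} (hx : x ∈ commStable A j) : x ∈ T A j :=
  hx []

lemma brk_mem_commStable {j : ℕ} {x : A} (hx : x ∈ commStable A j) (g : A) :
    brk x g ∈ commStable A (j + 1) := fun gs => by
  simpa only [List.foldl_cons, List.length_cons, ← add_assoc, Nat.add_right_comm j] using
    hx (g :: gs)

lemma commStable_anti {j k : ℕ} (hj : 1 ≤ j) (hjk : j ≤ k) :
    commStable A k ≤ commStable A j :=
  fun _ hx gs => T_anti (by omega) (by omega) (hx gs)

lemma commSpan_le_commStable (k : ℕ) : commSpan A k ≤ commStable A k := by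
  intro x hx gs
  induction gs generalizing k x with
  | nil => exact mem_T_of_mem_commSpan hx
  | cons g gs ih =>
    simpa only [List.foldl_cons, List.length_cons, ← add_assoc, Nat.add_right_comm k] using
      ih _ (brk_mem_commSpan hx g)

end NonUnitalNonAssocRing

section NonUnitalRing

variable {A : Type*} [NonUnitalRing A]

lemma brk_mul_left (x y z : A) : brk (x * y) z = x * brk y z + brk x z * y := by
  simp only [brk]; noncomm_ring

lemma brk_mul_right (x y z : A) : brk x (y * z) = brk x y * z + y * brk x z := by
  simp only [brk]; noncomm_ring

lemma brk_brk_mem_commSpan {k : ℕ} {x : A} (hx : x ∈ commSpan A k) (c g : A) :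
    brk x (brk c g) ∈ commSpan A (k + 2) := by
  rw [show brk x (brk c g) = brk (brk x c) g - brk (brk x g) c by simp only [brk]; noncomm_ring]
  exact sub_mem (brk_mem_commSpan (brk_mem_commSpan hx c) g)
    (brk_mem_commSpan (brk_mem_commSpan hx g) c)

lemma mul_mem_commStable (c : A) {s : ℕ} {z : A} (hz : z ∈ commSpan A (s + 2)) :
    c * z ∈ commStable A (s + 1) := by
  intro gs
  induction gs generalizing s c z with
  | nil =>
    exact T_anti le_add_self (by omega) ((T A _).mul_mem_left c z (mem_T_of_mem_commSpan hz))
  | cons g gs ih =>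
    have hindex : s + 1 + (g :: gs).length = s + 2 + gs.length := by
      simp only [List.length_cons]; omega
    have hsplit : brk (c * z) g = c * brk z g + (z * brk c g + brk (brk c g) z) := by
      rw [brk_mul_left, add_right_inj]; simp only [brk]; abel
    rw [List.foldl_cons, hsplit, foldl_brk_add, foldl_brk_add, hindex]
    refine add_mem (ih c (brk_mem_commSpan hz g)) (add_mem ?_ ?_)
    · refine commSpan_add_two_induction ?_ ?_ ?_ ?_ hz
      · rw [zero_mul, foldl_brk_zero]; exact zero_mem _
      · intro x y hx hy; rw [add_mul, foldl_brk_add]; exact add_mem hx hy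
      · intro x hx; rw [neg_mul, foldl_brk_neg]; exact neg_mem hx
      · intro x hx d
        rw [eq_sub_of_add_eq (brk_mul_right x d (brk c g)).symm, sub_eq_add_neg, foldl_brk_add,
          foldl_brk_neg]
        exact add_mem (commSpan_le_commStable _ (brk_mem_commSpan hx _) gs)
          (neg_mem (ih d (brk_brk_mem_commSpan hx c g)))
    · have hcomm : brk (brk c g) z = -brk z (brk c g) := (neg_sub _ _).symm
      rw [hcomm, foldl_brk_neg]
      exact neg_mem (commStable_anti (by omega) (by omega)
        (commSpan_le_commStable _ (brk_brk_mem_commSpan hz c g)) gs)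

lemma commSpan_mul_commSpan_mem_commStable {p q : ℕ} {u v : A} (hu : u ∈ commSpan A (p + 2))
    (hv : v ∈ commSpan A (q + 1)) : u * v ∈ commStable A (p + q + 1) := by
  induction q generalizing p u v with
  | zero =>
    rw [show u * v = v * u + brk u v by simp only [brk]; abel]
    exact add_mem (mul_mem_commStable v hu) (commStable_anti (by omega) (by omega)
      (commSpan_le_commStable _ (brk_mem_commSpan hu v)))
  | succ q ih =>
    refine commSpan_add_two_induction ?_ ?_ ?_ ?_ hv
    · rw [mul_zero]; exact zero_mem _
    · intro x y hx hy; rw [mul_add]; exact add_mem hx hy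
    · intro x hx; rw [mul_neg]; exact neg_mem hx
    · intro v hv f
      rw [eq_sub_of_add_eq (brk_mul_left u v f).symm]
      refine sub_mem (brk_mem_commStable (ih hu hv) f) ?_
      convert ih (brk_mem_commSpan hu f) hv using 2
      omega

end NonUnitalRing

theorem comm_mul_comm_mem_general {A : Type*} [Ring A] (m n : ℕ) (hm : 1 < m)
    (a : Fin m → A) (b : Fin n → A) :
    lnc a * lnc b ∈ T A (m + n - 2) := by
  obtain ⟨p, rfl⟩ : ∃ p, m = p + 2 := ⟨m - 2, by omega⟩
  rcases n with _ | q
  · simp [lnc]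
  · have h := commSpan_mul_commSpan_mem_commStable (lnc_mem_commSpan a) (lnc_mem_commSpan b)
    simpa only [show p + 2 + (q + 1) - 2 = p + q + 1 by omega] using mem_T_of_mem_commStable h

theorem comm_mul_comm_mem {A : Type*} [Ring A] (m n : ℕ) (hm : 1 < m) (hn : 1 < n)
    (a : Fin m → A) (b : Fin n → A) :
    lnc a * lnc b ∈ T A (m + n - 2) :=
  comm_mul_comm_mem_general m n hm a b
end
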